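/- Let V be a real normed vector space, let μ1, μ2 ∈ V with μ1 ≠ μ2, and let p, q be positive real numbers with p ≠ q. Define h1 = (p/(p+q))·μ1 + (q/(p+q))·μ2 and h2 = (q/(p+q))·μ1 + (p/(p+q))·μ2, the original second-layer representations g1 = (p/(p+q))·h1 + (q/(p+q))·h2 and g2 = (q/(p+q))·h1 + (p/(p+q))·h2 with Dist = ‖g1 - g2‖, and the rewired second-layer representations with intra-class probability p' = 1 and inter-class probability q' = 0, namely g1' = h1 and g2' = h2, with Dist' = ‖g1' - g2'‖. Then Dist' = ((p + q)/|p - q|) · Dist and Dist' > Dist. -/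

import Mathlib

/-! Each GCN layer mixes the two class representations with weights `p/(p+q)` and `q/(p+q)`,
which multiplies the difference of the class centroids by `(p - q)/(p + q)`. Hence
`Dist' = c ‖μ1 - μ2‖` and `Dist = c² ‖μ1 - μ2‖` with `c = |p - q|/(p + q) ∈ (0, 1)`. -/

theorem smul_add_smul_sub_smul_add_smul {R M : Type*} [Ring R] [AddCommGroup M] [Module R M]
    (a b : R) (x y : M) : (a • x + b • y) - (b • x + a • y) = (a - b) • (x - y) := by
  rw [sub_smul, smul_sub, smul_sub]
  abel

theorem norm_smul_add_smul_sub_smul_add_smul {𝕜 V : Type*} [NormedField 𝕜]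
    [SeminormedAddCommGroup V] [NormedSpace 𝕜 V] (a b : 𝕜) (x y : V) :
    ‖(a • x + b • y) - (b • x + a • y)‖ = ‖a - b‖ * ‖x - y‖ := by
  rw [smul_add_smul_sub_smul_add_smul, norm_smul]

theorem norm_mix_sub_mix {V : Type*} [SeminormedAddCommGroup V] [NormedSpace ℝ V]
    (p q : ℝ) (x y : V) :
    ‖((p / (p + q)) • x + (q / (p + q)) • y) - ((q / (p + q)) • x + (p / (p + q)) • y)‖ =
      |p - q| / |p + q| * ‖x - y‖ := by
  rw [norm_smul_add_smul_sub_smul_add_smul, Real.norm_eq_abs, div_sub_div_same, abs_div]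

theorem abs_sub_div_add_pos {p q : ℝ} (hp : 0 < p) (hq : 0 < q) (hpq : p ≠ q) :
    0 < |p - q| / (p + q) :=
  div_pos (abs_pos.mpr (sub_ne_zero.mpr hpq)) (add_pos hp hq)

theorem abs_sub_div_add_lt_one {p q : ℝ} (hp : 0 < p) (hq : 0 < q) :
    |p - q| / (p + q) < 1 := by
  rw [div_lt_one (add_pos hp hq), abs_sub_lt_iff]
  constructor <;> linarith

/-- With the rewiring `p' = 1`, `q' = 0` (so `g1' = h1`, `g2' = h2`), the rewired distance
satisfies `Dist' = ((p + q) / |p - q|) * Dist` and `Dist' > Dist`. -/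
theorem csbm_graphtop_rewiring {V : Type*} [NormedAddCommGroup V] [NormedSpace ℝ V]
    (μ1 μ2 : V) (hμ : μ1 ≠ μ2) (p q : ℝ) (hp : 0 < p) (hq : 0 < q) (hpq : p ≠ q)
    (h1 h2 g1 g2 g1' g2' : V)
    (hh1 : h1 = (p / (p + q)) • μ1 + (q / (p + q)) • μ2)
    (hh2 : h2 = (q / (p + q)) • μ1 + (p / (p + q)) • μ2)
    (hg1 : g1 = (p / (p + q)) • h1 + (q / (p + q)) • h2)
    (hg2 : g2 = (q / (p + q)) • h1 + (p / (p + q)) • h2)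
    (hg1' : g1' = h1) (hg2' : g2' = h2)
    (Dist Dist' : ℝ) (hDist : Dist = ‖g1 - g2‖) (hDist' : Dist' = ‖g1' - g2'‖) :
    Dist' = ((p + q) / |p - q|) * Dist ∧ Dist' > Dist := by
  set c := |p - q| / (p + q) with hc
  have hpq_abs : |p + q| = p + q := abs_of_pos (add_pos hp hq)
  have hD' : Dist' = c * ‖μ1 - μ2‖ := by
    rw [hDist', hg1', hg2', hh1, hh2, norm_mix_sub_mix, hpq_abs]
  have hD : Dist = c * Dist' := by
    rw [hDist, hg1, hg2, norm_mix_sub_mix, hpq_abs, hDist', hg1', hg2']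
  have hc_pos : 0 < c := abs_sub_div_add_pos hp hq hpq
  have hD'_pos : 0 < Dist' := by
    rw [hD']
    exact mul_pos hc_pos (norm_pos_iff.mpr (sub_ne_zero.mpr hμ))
  constructor
  · have hpq_ne : |p - q| ≠ 0 := abs_ne_zero.mpr (sub_ne_zero.mpr hpq)
    rw [hD, hc]
    field_simp
  · rw [hD]
    exact mul_lt_of_lt_one_left hD'_pos (abs_sub_div_add_lt_one hp hq)
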